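/- Let D be a non-strong arc-locally in-semicomplete digraph and let Q be a non-initial strong component of D whose induced subdigraph is an odd extended cycle of length at least five. Let W be the union of the vertex sets of all strong components of D that reach Q by a directed path. Then W ↦ V(Q): every vertex of W dominates every vertex of Q and there is no arc from V(Q) to W. -/

import Mathlib

variable {V : Type*}

/-- `u` and `v` are adjacent in the digraph with arc relation `A`. -/
def DAdj (A : V → V → Prop) (u v : V) : Prop := A u v ∨ A v u

/-- `A` is arc-locally in-semicomplete: for any four distinct vertices
`v1,v2,v3,v4` with `v1→v2`, `v2→v3`, `v4→v3`, the vertices `v1,v4` are adjacent. -/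
def ArcLocallyIn (A : V → V → Prop) : Prop :=
  ∀ v1 v2 v3 v4 : V, v1 ≠ v2 → v1 ≠ v3 → v1 ≠ v4 → v2 ≠ v3 → v2 ≠ v4 → v3 ≠ v4 →
    A v1 v2 → A v2 v3 → A v4 v3 → DAdj A v1 v4

/-- `A` is arc-locally out-semicomplete: for any four distinct vertices
`v1,v2,v3,v4` with `v2→v1`, `v2→v3`, `v3→v4`, the vertices `v1,v4` are adjacent. -/
def ArcLocallyOut (A : V → V → Prop) : Prop :=
  ∀ v1 v2 v3 v4 : V, v1 ≠ v2 → v1 ≠ v3 → v1 ≠ v4 → v2 ≠ v3 → v2 ≠ v4 → v3 ≠ v4 →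
    A v2 v1 → A v2 v3 → A v3 v4 → DAdj A v1 v4

/-- The underlying simple graph of the digraph `A`. -/
def Underlying (A : V → V → Prop) : SimpleGraph V := SimpleGraph.fromRel A

/-- A simple graph is perfect if every induced subgraph has chromatic number
equal to its clique number. -/
def GraphPerfect (G : SimpleGraph V) : Prop :=
  ∀ S : Set V, (G.induce S).chromaticNumber = ((G.induce S).cliqueNum : ℕ∞)

/-- A digraph is diperfect if its underlying graph is perfect. -/
def Diperfect (A : V → V → Prop) : Prop := GraphPerfect (Underlying A)

/-- The pairs of consecutive arcs `x ∈ S, y ∈ S, x→y` restricted to `S`. -/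
def ArcOn (A : V → V → Prop) (S : Set V) (x y : V) : Prop := x ∈ S ∧ y ∈ S ∧ A x y

/-- The induced subdigraph on `S` is strong. -/
def StrongOn (A : V → V → Prop) (S : Set V) : Prop :=
  ∀ u ∈ S, ∀ v ∈ S, Relation.ReflTransGen (ArcOn A S) u v

/-- `S` is (the vertex set of) a strong component: a maximal set inducing a
strong subdigraph. -/
def IsStrongComponent (A : V → V → Prop) (S : Set V) : Prop :=
  S.Nonempty ∧ StrongOn A S ∧ ∀ T : Set V, S ⊆ T → StrongOn A T → T ⊆ S

/-- The strong component `S` is initial: no outside vertex dominates a vertex of `S`. -/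
def IsInitial (A : V → V → Prop) (S : Set V) : Prop :=
  ∀ v, v ∉ S → ∀ u ∈ S, ¬ A v u

/-- The digraph is strong. -/
def IsStrong (A : V → V → Prop) : Prop := ∀ u v : V, Relation.ReflTransGen A u v

/-- There is a directed path from `u` to `v`. -/
def Reach (A : V → V → Prop) (u v : V) : Prop := Relation.ReflTransGen A u v

/-- The induced subdigraph on `S` is semicomplete. -/
def SemicompleteOn (A : V → V → Prop) (S : Set V) : Prop :=
  ∀ u ∈ S, ∀ v ∈ S, u ≠ v → DAdj A u v

/-- The induced subdigraph on `S` is bipartite (its underlying graph is 2-colorable). -/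
def BipartiteOn (A : V → V → Prop) (S : Set V) : Prop :=
  ∃ T : Set V, ∀ u ∈ S, ∀ v ∈ S, DAdj A u v →
    ((u ∈ T ∧ v ∉ T) ∨ (u ∉ T ∧ v ∈ T))

/-- The induced subdigraph on `S` is connected (in the underlying graph). -/
def ConnOn (A : V → V → Prop) (S : Set V) : Prop :=
  ∀ u ∈ S, ∀ v ∈ S,
    Relation.ReflTransGen (fun x y => x ∈ S ∧ y ∈ S ∧ DAdj A x y) u v

/-- The digraph is connected. -/
def IsConnected' (A : V → V → Prop) : Prop := ConnOn A Set.univ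

/-- `D` has a clique cut: a set `B` inducing a semicomplete subdigraph whose
removal disconnects the digraph. -/
def HasCliqueCut (A : V → V → Prop) : Prop :=
  ∃ B : Set V, SemicompleteOn A B ∧ ¬ ConnOn A Bᶜ

/-- The induced subdigraph on `S` is an extended cycle of length `k`:
`S` is partitioned into `k` nonempty (necessarily stable) sets `X 0, …, X (k-1)`
and the arcs between vertices of `S` are exactly those from `X i` to `X (i+1)`
(indices modulo `k`). -/
def IsExtendedCycleOn (A : V → V → Prop) (S : Set V) (k : ℕ) : Prop :=
  2 ≤ k ∧ ∃ X : ZMod k → Set V,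
    (∀ i, (X i).Nonempty) ∧
    (∀ i j, i ≠ j → Disjoint (X i) (X j)) ∧
    (⋃ i, X i) = S ∧
    (∀ u ∈ S, ∀ v ∈ S, (A u v ↔ ∃ i, u ∈ X i ∧ v ∈ X (i + 1)))

/-- The induced subdigraph on `S` is an odd extended cycle of length at least five. -/
def IsOddExtCycle5On (A : V → V → Prop) (S : Set V) : Prop :=
  ∃ k : ℕ, Odd k ∧ 5 ≤ k ∧ IsExtendedCycleOn A S k

section Aux

variable {V : Type*}

private lemma deco' {A : V → V → Prop} {a b : V} (h : Relation.ReflTransGen A a b) :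
    ∀ {c : V}, Relation.ReflTransGen A b c →
      Relation.ReflTransGen
        (fun p q => A p q ∧ Relation.ReflTransGen A a p ∧ Relation.ReflTransGen A q c) a b := by
  induction h with
  | refl => intro c _; exact .refl
  | tail hab hbc ih =>
    intro d hcd
    exact Relation.ReflTransGen.tail (ih (Relation.ReflTransGen.head hbc hcd)) ⟨hbc, hab, hcd⟩

private lemma deco {A : V → V → Prop} {a b : V} (h : Relation.ReflTransGen A a b) :
    Relation.ReflTransGen
      (fun p q => A p q ∧ Relation.ReflTransGen A a p ∧ Relation.ReflTransGen A q b) a b :=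
  deco' h .refl

private lemma comp_eq {A : V → V → Prop} {S T : Set V}
    (hS : IsStrongComponent A S) (hT : IsStrongComponent A T)
    {x : V} (hxS : x ∈ S) (hxT : x ∈ T) : S = T := by
  have hst : StrongOn A (S ∪ T) := by
    have p1 : ∀ {u : V}, u ∈ S ∪ T → Relation.ReflTransGen (ArcOn A (S ∪ T)) u x := by
      rintro u (hu | hu)
      · exact Relation.ReflTransGen.mono (p := ArcOn A (S ∪ T)) (fun a b h => ⟨Or.inl h.1, Or.inl h.2.1, h.2.2⟩) _ _ (hS.2.1 u hu x hxS)
      · exact Relation.ReflTransGen.mono (p := ArcOn A (S ∪ T)) (fun a b h => ⟨Or.inr h.1, Or.inr h.2.1, h.2.2⟩) _ _ (hT.2.1 u hu x hxT)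
    have p2 : ∀ {v : V}, v ∈ S ∪ T → Relation.ReflTransGen (ArcOn A (S ∪ T)) x v := by
      rintro v (hv | hv)
      · exact Relation.ReflTransGen.mono (p := ArcOn A (S ∪ T)) (fun a b h => ⟨Or.inl h.1, Or.inl h.2.1, h.2.2⟩) _ _ (hS.2.1 x hxS v hv)
      · exact Relation.ReflTransGen.mono (p := ArcOn A (S ∪ T)) (fun a b h => ⟨Or.inr h.1, Or.inr h.2.1, h.2.2⟩) _ _ (hT.2.1 x hxT v hv)
    exact fun u hu v hv => (p1 hu).trans (p2 hv)
  have h1 := hS.2.2 _ Set.subset_union_left hst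
  have h2 := hT.2.2 _ Set.subset_union_right hst
  exact subset_antisymm (fun y hy => h2 (Or.inl hy)) (fun y hy => h1 (Or.inr hy))

private lemma noback {A : V → V → Prop} {Q : Set V} (hQ : IsStrongComponent A Q)
    {w : V} (hw : w ∉ Q) {b : V} (hb : b ∈ Q) (hreach : Relation.ReflTransGen A w b)
    {q : V} (hq : q ∈ Q) : ¬ A q w := by
  intro hqw
  set T : Set V := Q ∪ {x | Relation.ReflTransGen A w x ∧ Relation.ReflTransGen A x b} with hT
  have hwT : w ∈ T := Or.inr ⟨.refl, hreach⟩
  have hQT : Q ⊆ T := Set.subset_union_left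
  have monoQ : ∀ {u v : V}, Relation.ReflTransGen (ArcOn A Q) u v →
      Relation.ReflTransGen (ArcOn A T) u v :=
    fun h => Relation.ReflTransGen.mono (p := ArcOn A T) (fun x y h' => ⟨hQT h'.1, hQT h'.2.1, h'.2.2⟩) _ _ h
  have sub1 : ∀ x ∈ T, Relation.ReflTransGen (ArcOn A T) x b := by
    rintro x (hx | ⟨hwx, hxb⟩)
    · exact monoQ (hQ.2.1 x hx b hb)
    · refine Relation.ReflTransGen.mono ?_ _ _ (deco hxb)
      rintro p r ⟨hpr, hxp, hrb⟩
      exact ⟨Or.inr ⟨hwx.trans hxp, Relation.ReflTransGen.head hpr hrb⟩,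
             Or.inr ⟨hwx.trans (hxp.tail hpr), hrb⟩, hpr⟩
  have sub2 : ∀ x ∈ T, Relation.ReflTransGen (ArcOn A T) b x := by
    rintro x (hx | ⟨hwx, hxb⟩)
    · exact monoQ (hQ.2.1 b hb x hx)
    · have h1 : Relation.ReflTransGen (ArcOn A T) b q := monoQ (hQ.2.1 b hb q hq)
      have h2 : Relation.ReflTransGen (ArcOn A T) q w :=
        Relation.ReflTransGen.single ⟨hQT hq, hwT, hqw⟩
      have h3 : Relation.ReflTransGen (ArcOn A T) w x := by
        refine Relation.ReflTransGen.mono ?_ _ _ (deco hwx)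
        rintro p r ⟨hpr, hwp, hrx⟩
        exact ⟨Or.inr ⟨hwp, (Relation.ReflTransGen.head hpr hrx).trans hxb⟩,
               Or.inr ⟨hwp.tail hpr, hrx.trans hxb⟩, hpr⟩
      exact (h1.trans h2).trans h3
  have hstrong : StrongOn A T := fun u hu v hv => (sub1 u hu).trans (sub2 v hv)
  exact hw (hQ.2.2 T hQT hstrong hwT)

private lemma rot {A : V → V → Prop} (hD : ArcLocallyIn A) {Q : Set V}
    (hQec : IsOddExtCycle5On A Q) {w : V} (hw : w ∉ Q)
    (hnb : ∀ q ∈ Q, ¬ A q w) {q0 : V} (hq0 : q0 ∈ Q) (harc : A w q0) :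
    ∀ q ∈ Q, A w q := by
  obtain ⟨k, hodd, hk5, hk2, X, hne, hdisj, hun, hiff⟩ := hQec
  haveI : NeZero k := ⟨by omega⟩
  have hmem : ∀ {i : ZMod k} {x : V}, x ∈ X i → x ∈ Q := by
    intro i x hx; rw [← hun]; exact Set.mem_iUnion.2 ⟨i, hx⟩
  have harcX : ∀ {i : ZMod k} {x y : V}, x ∈ X i → y ∈ X (i + 1) → A x y :=
    fun {i x y} hx hy => (hiff x (hmem hx) y (hmem hy)).2 ⟨i, hx, hy⟩
  have hcastne : ∀ a b : ℕ, a < k → b < k → a ≠ b → (a : ZMod k) ≠ (b : ZMod k) := by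
    intro a b ha hb hab h
    rw [ZMod.natCast_eq_natCast_iff', Nat.mod_eq_of_lt ha, Nat.mod_eq_of_lt hb] at h
    exact hab h
  have h1 : (1 : ZMod k) ≠ 0 := by
    have := hcastne 1 0 (by omega) (by omega) (by omega); simpa using this
  have h2 : (2 : ZMod k) ≠ 0 := by
    have := hcastne 2 0 (by omega) (by omega) (by omega); simpa using this
  have h21 : (2 : ZMod k) ≠ 1 := by
    have := hcastne 2 1 (by omega) (by omega) (by omega); simpa using this
  have step : ∀ i : ZMod k, (∃ q ∈ X i, A w q) → ∀ y ∈ X (i - 2), A w y := by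
    rintro i ⟨q, hqX, hwq⟩ y hy
    obtain ⟨z, hz⟩ := hne (i - 1)
    have hyz : A y z := harcX hy (by rw [show i - 2 + 1 = i - 1 by ring]; exact hz)
    have hzq : A z q := harcX hz (by rw [show i - 1 + 1 = i by ring]; exact hqX)
    have hne_yz : y ≠ z := by
      intro h
      refine Set.disjoint_left.mp (hdisj (i - 2) (i - 1) ?_) hy (h ▸ hz)
      intro h'; exact h21 (sub_right_inj.mp h')
    have hne_yq : y ≠ q := by
      intro h
      refine Set.disjoint_left.mp (hdisj (i - 2) i ?_) hy (h ▸ hqX)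
      intro h'; exact h2 (sub_eq_self.mp h')
    have hne_zq : z ≠ q := by
      intro h
      refine Set.disjoint_left.mp (hdisj (i - 1) i ?_) hz (h ▸ hqX)
      intro h'; exact h1 (sub_eq_self.mp h')
    have hadj := hD y z q w hne_yz hne_yq (fun h => hw (h ▸ hmem hy)) hne_zq
      (fun h => hw (h ▸ hmem hz)) (fun h => hw (h ▸ hmem hqX)) hyz hzq hwq
    exact hadj.resolve_left (hnb y (hmem hy))
  have hq0' := hq0
  rw [← hun] at hq0'
  obtain ⟨i0, hi0⟩ := Set.mem_iUnion.mp hq0'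
  have iter : ∀ m : ℕ, ∀ y ∈ X (i0 - 2 * ((m : ZMod k) + 1)), A w y := by
    intro m
    induction m with
    | zero =>
      have e : i0 - 2 * (((0 : ℕ) : ZMod k) + 1) = i0 - 2 := by push_cast; ring
      rw [e]; exact step i0 ⟨q0, hi0, harc⟩
    | succ n ih =>
      obtain ⟨e, he⟩ := hne (i0 - 2 * ((n : ZMod k) + 1))
      have e2 : i0 - 2 * ((n : ZMod k) + 1) - 2 = i0 - 2 * (((n + 1 : ℕ) : ZMod k) + 1) := by
        push_cast; ring
      intro y hy
      exact step _ ⟨e, he, ih e he⟩ y (by rw [e2]; exact hy)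
  intro q hq
  rw [← hun] at hq
  obtain ⟨j, hj⟩ := Set.mem_iUnion.mp hq
  have h2t : (2 : ZMod k) * (((k + 1) / 2 : ℕ) : ZMod k) = 1 := by
    have hnat : 2 * ((k + 1) / 2) = k + 1 := by obtain ⟨r, hr⟩ := hodd; omega
    calc (2 : ZMod k) * (((k + 1) / 2 : ℕ) : ZMod k)
        = ((2 * ((k + 1) / 2) : ℕ) : ZMod k) := by push_cast; ring
      _ = ((k + 1 : ℕ) : ZMod k) := by rw [hnat]
      _ = 1 := by push_cast [ZMod.natCast_self]; ring
  set c : ZMod k := (i0 - j) * (((k + 1) / 2 : ℕ) : ZMod k) with hc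
  set m : ℕ := c.val + (k - 1) with hm
  have hcast : ((c.val : ℕ) : ZMod k) = c := ZMod.natCast_rightInverse c
  have hk0 : ((k - 1 : ℕ) : ZMod k) + 1 = 0 := by
    have e : ((k - 1 : ℕ) : ZMod k) + 1 = ((k - 1 + 1 : ℕ) : ZMod k) := by push_cast; ring
    rw [e, show k - 1 + 1 = k by omega, ZMod.natCast_self]
  have hmk : ((m : ℕ) : ZMod k) + 1 = c := by
    rw [hm]
    push_cast [hcast] at hk0 ⊢
    rw [add_assoc, hk0, add_zero]
  have hfinal : i0 - 2 * (((m : ℕ) : ZMod k) + 1) = j := by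
    rw [hmk, hc, show (2 : ZMod k) * ((i0 - j) * (((k + 1) / 2 : ℕ) : ZMod k))
      = ((2 : ZMod k) * (((k + 1) / 2 : ℕ) : ZMod k)) * (i0 - j) by ring, h2t, one_mul]
    ring
  exact iter m q (by rw [hfinal]; exact hj)

end Aux

/-- If `D` is non-strong arc-locally in-semicomplete and `Q` is
a non-initial strong component inducing an odd extended cycle of length at least
five, and `W` is the union of the strong components reaching `Q`, then `W ↦ V(Q)`. -/
theorem stmt_5 {V : Type*} [Fintype V] (A : V → V → Prop) (hirr : Irreflexive A)
    (hD : ArcLocallyIn A) (hns : ¬ IsStrong A)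
    (Q : Set V) (hQ : IsStrongComponent A Q) (hQni : ¬ IsInitial A Q)
    (hQec : IsOddExtCycle5On A Q)
    (W : Set V)
    (hW : W = {v | ∃ K : Set V, IsStrongComponent A K ∧ K ≠ Q ∧ v ∈ K ∧
      ∃ u ∈ K, ∃ w ∈ Q, Reach A u w}) :
    (∀ w ∈ W, ∀ q ∈ Q, A w q) ∧ (∀ q ∈ Q, ∀ w ∈ W, ¬ A q w) := by
  have succ_arc : ∀ q ∈ Q, ∃ q', q' ∈ Q ∧ q ≠ q' ∧ A q q' := by
    obtain ⟨k, hodd, hk5, hk2, X, hne, hdisj, hun, hiff⟩ := id hQec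
    intro q hq
    have hq' := hq
    rw [← hun] at hq'
    obtain ⟨j, hj⟩ := Set.mem_iUnion.mp hq'
    obtain ⟨q', hq'X⟩ := hne (j + 1)
    have hmem : q' ∈ Q := by rw [← hun]; exact Set.mem_iUnion.2 ⟨_, hq'X⟩
    refine ⟨q', hmem, ?_, (hiff q hq q' hmem).2 ⟨j, hj, hq'X⟩⟩
    intro h
    have hdj : j ≠ j + 1 := by
      intro h'
      have h1 : ((1 : ℕ) : ZMod k) = ((0 : ℕ) : ZMod k) := by
        push_cast
        have := (left_eq_add).mp h'
        simpa using this
      rw [ZMod.natCast_eq_natCast_iff', Nat.mod_eq_of_lt (by omega),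
        Nat.mod_eq_of_lt (by omega)] at h1
      exact one_ne_zero h1
    exact Set.disjoint_left.mp (hdisj j (j + 1) hdj) hj (h ▸ hq'X)
  have key : ∀ v, v ∉ Q → ∀ b, b ∈ Q → Relation.ReflTransGen A v b → ∀ q ∈ Q, A v q := by
    intro v hv b hb hr
    have H : ∀ a : V, Relation.ReflTransGen A a b → (a ∈ Q ∨ ∀ q ∈ Q, A a q) := by
      intro a h
      induction h using Relation.ReflTransGen.head_induction_on with
      | refl => exact Or.inl hb
      | head hac hcb ih =>
        rename_i a c
        by_cases haQ : a ∈ Q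
        · exact Or.inl haQ
        right
        have hra : Relation.ReflTransGen A a b := Relation.ReflTransGen.head hac hcb
        have hnb : ∀ q ∈ Q, ¬ A q a := fun q hq => noback hQ haQ hb hra hq
        by_cases hcQ : c ∈ Q
        · exact rot hD hQec haQ hnb hcQ hac
        have hdomc : ∀ q ∈ Q, A c q := ih.resolve_left hcQ
        intro q hq
        obtain ⟨q', hq'Q, hqq', hqarc⟩ := succ_arc q hq
        have hadj := hD a c q' q (fun h => hirr a (h ▸ hac))
          (fun h => haQ (h ▸ hq'Q)) (fun h => haQ (h ▸ hq))
          (fun h => hcQ (h ▸ hq'Q)) (fun h => hcQ (h ▸ hq))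
          (fun h => hqq' h.symm) hac (hdomc q' hq'Q) hqarc
        exact hadj.resolve_right (hnb q hq)
    exact (H v hr).resolve_left hv
  have hWreach : ∀ w ∈ W, w ∉ Q ∧ ∃ b ∈ Q, Relation.ReflTransGen A w b := by
    intro w hwW
    rw [hW] at hwW
    obtain ⟨K, hK, hKne, hwK, u, huK, b, hbQ, hru⟩ := hwW
    have hwQ : w ∉ Q := fun h => hKne (comp_eq hK hQ hwK h)
    exact ⟨hwQ, b, hbQ, (Relation.ReflTransGen.mono (p := A) (fun x y h => h.2.2) _ _ (hK.2.1 w hwK u huK)).trans hru⟩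
  constructor
  · intro w hwW q hq
    obtain ⟨hwQ, b, hbQ, hr⟩ := hWreach w hwW
    exact key w hwQ b hbQ hr q hq
  · intro q hq w hwW
    obtain ⟨hwQ, b, hbQ, hr⟩ := hWreach w hwW
    exact noback hQ hwQ hbQ hr hq
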